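/- Let n be a nonempty finite type, κ a finite type, and P : κ → Matrix n n ℂ a family of matrices with (P k)* = P k, P k * P k = P k, P k * P l = 0 for k ≠ l, and Σ_k P k = 1. Let σ be a positive definite matrix of trace 1 with σ * P k = P k * σ for all k, and let ρ be a positive definite matrix of trace 1. Set 𝓔(ρ) := Σ_k P k * ρ * P k. Then 𝓔(ρ) is positive definite of trace 1 and D(ρ‖σ) = D(ρ‖𝓔(ρ)) + D(𝓔(ρ)‖σ). -/

import Mathlib

open Matrix
open scoped ComplexOrder

/-- matrix logarithm via the continuous functional calculus -/
noncomputable def mlog {n : Type*} [Fintype n] [DecidableEq n] (A : Matrix n n ℂ) :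
    Matrix n n ℂ := cfc Real.log A

/-- quantum relative entropy `D(ρ‖σ) = Re Tr[ρ (log ρ − log σ)]` -/
noncomputable def relEnt {n : Type*} [Fintype n] [DecidableEq n]
    (ρ σ : Matrix n n ℂ) : ℝ := (Matrix.trace (ρ * (mlog ρ - mlog σ))).re

/-! The pinching `𝓔(A) = ∑ₖ Pₖ A Pₖ` commutes with every `Pₖ`, and by cyclicity of the trace
`Tr[𝓔(ρ) X] = Tr[ρ X]` whenever `X` commutes with every `Pₖ`. Commuting with `A` passes to
`log A`, so this applies to `X = log σ` and to `X = log 𝓔(ρ)`; these two trace identities are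
exactly what makes the cross terms of `D(ρ‖𝓔(ρ)) + D(𝓔(ρ)‖σ)` cancel against `D(ρ‖σ)`. -/

open Finset

namespace Matrix

variable {n κ R : Type*} [Fintype n] [Fintype κ]

def pinching [Semiring R] (P : κ → Matrix n n R) (A : Matrix n n R) : Matrix n n R :=
  ∑ k, P k * A * P k

section Semiring

variable [Semiring R] {P : κ → Matrix n n R}

lemma mul_pinching_of_orthogonal (hPidem : ∀ k, P k * P k = P k)
    (hPorth : ∀ k l, k ≠ l → P k * P l = 0) (A : Matrix n n R) (l : κ) :
    P l * pinching P A = P l * A * P l := by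
  rw [pinching, mul_sum, sum_eq_single l]
  · rw [← mul_assoc, ← mul_assoc, hPidem]
  · intro k _ hkl
    rw [← mul_assoc, ← mul_assoc, hPorth l k (Ne.symm hkl), zero_mul, zero_mul]
  · exact fun h => absurd (mem_univ l) h

lemma pinching_mul_of_orthogonal (hPidem : ∀ k, P k * P k = P k)
    (hPorth : ∀ k l, k ≠ l → P k * P l = 0) (A : Matrix n n R) (l : κ) :
    pinching P A * P l = P l * A * P l := by
  rw [pinching, sum_mul, sum_eq_single l]
  · rw [mul_assoc, hPidem]
  · intro k _ hkl
    rw [mul_assoc, hPorth k l hkl, mul_zero]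
  · exact fun h => absurd (mem_univ l) h

lemma commute_pinching_of_orthogonal (hPidem : ∀ k, P k * P k = P k)
    (hPorth : ∀ k l, k ≠ l → P k * P l = 0) (A : Matrix n n R) (l : κ) :
    Commute (P l) (pinching P A) := by
  rw [commute_iff_eq, mul_pinching_of_orthogonal hPidem hPorth,
    pinching_mul_of_orthogonal hPidem hPorth]

lemma isHermitian_pinching [StarRing R] (hPsa : ∀ k, (P k)ᴴ = P k) {A : Matrix n n R}
    (hA : A.IsHermitian) : (pinching P A).IsHermitian :=
  isSelfAdjoint_sum _ fun k _ => by
    have h := isHermitian_conjTranspose_mul_mul (P k) hA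
    rwa [hPsa] at h

end Semiring

section CommSemiring

variable [CommSemiring R] {P : κ → Matrix n n R}

lemma trace_pinching_mul [DecidableEq n] (hPidem : ∀ k, P k * P k = P k) (hPsum : ∑ k, P k = 1)
    (A : Matrix n n R) {X : Matrix n n R} (hX : ∀ k, Commute (P k) X) :
    trace (pinching P A * X) = trace (A * X) := by
  have hterm : ∀ k, trace (P k * A * P k * X) = trace (P k * (A * X)) := fun k => by
    have hcycle : P k * A * P k * X = P k * (A * X) * P k := by
      rw [mul_assoc _ (P k), (hX k).eq]
      simp only [mul_assoc]
    rw [hcycle, trace_mul_comm, ← mul_assoc, hPidem]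
  rw [pinching, sum_mul, trace_sum, Fintype.sum_congr _ _ hterm, ← trace_sum, ← sum_mul,
    hPsum, one_mul]

lemma trace_pinching [DecidableEq n] (hPidem : ∀ k, P k * P k = P k) (hPsum : ∑ k, P k = 1)
    (A : Matrix n n R) : trace (pinching P A) = trace A := by
  simpa using trace_pinching_mul hPidem hPsum A fun k => Commute.one_right (P k)

lemma dotProduct_pinching_mulVec [StarRing R] (hPsa : ∀ k, (P k)ᴴ = P k) (A : Matrix n n R)
    (x : n → R) :
    star x ⬝ᵥ (pinching P A *ᵥ x) = ∑ k, star (P k *ᵥ x) ⬝ᵥ (A *ᵥ (P k *ᵥ x)) := by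
  rw [pinching, sum_mulVec, dotProduct_sum]
  refine Fintype.sum_congr _ _ fun k => ?_
  rw [star_mulVec, hPsa, ← dotProduct_mulVec, mulVec_mulVec, mulVec_mulVec, mul_assoc]

end CommSemiring

lemma PosDef.pinching [CommRing R] [PartialOrder R] [StarRing R] [IsOrderedCancelAddMonoid R]
    [DecidableEq n] {P : κ → Matrix n n R} (hPsa : ∀ k, (P k)ᴴ = P k)
    (hPsum : ∑ k, P k = 1) {A : Matrix n n R} (hA : A.PosDef) : (pinching P A).PosDef := by
  refine .of_dotProduct_mulVec_pos (isHermitian_pinching hPsa hA.1) fun x hx => ?_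
  obtain ⟨k₀, hk₀⟩ : ∃ k, P k *ᵥ x ≠ 0 := by
    by_contra! h
    apply hx
    rw [← one_mulVec x, ← hPsum, sum_mulVec, Fintype.sum_eq_zero _ h]
  rw [dotProduct_pinching_mulVec hPsa]
  exact sum_pos' (fun k _ => hA.posSemidef.dotProduct_mulVec_nonneg _)
    ⟨k₀, mem_univ _, hA.dotProduct_mulVec_pos hk₀⟩

end Matrix

lemma Commute.mlog_left {n : Type*} [Fintype n] [DecidableEq n] {A B : Matrix n n ℂ}
    (h : Commute A B) : Commute (mlog A) B :=
  h.cfc_real Real.log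

lemma relEnt_eq_add_of_trace_mul_mlog_eq {n : Type*} [Fintype n] [DecidableEq n]
    {ρ τ σ : Matrix n n ℂ} (hτ : trace (τ * mlog τ) = trace (ρ * mlog τ))
    (hσ : trace (τ * mlog σ) = trace (ρ * mlog σ)) :
    relEnt ρ σ = relEnt ρ τ + relEnt τ σ := by
  simp only [relEnt, mul_sub, trace_sub, Complex.sub_re, hτ, hσ]
  ring

theorem relEnt_pinching_chain_rule_general
    {n : Type*} [Fintype n] [DecidableEq n]
    {κ : Type*} [Fintype κ]
    (P : κ → Matrix n n ℂ)
    (hPsa : ∀ k, (P k)ᴴ = P k)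
    (hPidem : ∀ k, P k * P k = P k)
    (hPorth : ∀ k l, k ≠ l → P k * P l = 0)
    (hPsum : ∑ k, P k = 1)
    (σ : Matrix n n ℂ)
    (hσP : ∀ k, σ * P k = P k * σ)
    (ρ : Matrix n n ℂ) (hρ : ρ.PosDef) (hρtr : Matrix.trace ρ = 1) :
    ((∑ k, P k * ρ * P k).PosDef ∧ Matrix.trace (∑ k, P k * ρ * P k) = 1) ∧
    relEnt ρ σ = relEnt ρ (∑ k, P k * ρ * P k) + relEnt (∑ k, P k * ρ * P k) σ := by
  have hlogσ : ∀ k, Commute (P k) (mlog σ) := fun k => (Commute.mlog_left (hσP k)).symm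
  have hlogE : ∀ k, Commute (P k) (mlog (pinching P ρ)) := fun k =>
    (commute_pinching_of_orthogonal hPidem hPorth ρ k).symm.mlog_left.symm
  refine ⟨⟨hρ.pinching hPsa hPsum, (trace_pinching hPidem hPsum ρ).trans hρtr⟩,
    relEnt_eq_add_of_trace_mul_mlog_eq ?_ ?_⟩
  · exact trace_pinching_mul hPidem hPsum ρ hlogE
  · exact trace_pinching_mul hPidem hPsum ρ hlogσ

/-- **Pinching chain rule** (used in the proof of Theorem 4.1, part 2):
for the pinching `𝓔(ρ) = Σ_k P_k ρ P_k` along orthogonal projections commuting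
with `σ`, one has `D(ρ‖σ) = D(ρ‖𝓔(ρ)) + D(𝓔(ρ)‖σ)`, and `𝓔(ρ)` is a positive
definite state. -/
theorem relEnt_pinching_chain_rule
    {n : Type*} [Fintype n] [DecidableEq n] [Nonempty n]
    {κ : Type*} [Fintype κ] [DecidableEq κ]
    (P : κ → Matrix n n ℂ)
    (hPsa : ∀ k, (P k)ᴴ = P k)
    (hPidem : ∀ k, P k * P k = P k)
    (hPorth : ∀ k l, k ≠ l → P k * P l = 0)
    (hPsum : ∑ k, P k = 1)
    (σ : Matrix n n ℂ) (hσ : σ.PosDef) (hσtr : Matrix.trace σ = 1)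
    (hσP : ∀ k, σ * P k = P k * σ)
    (ρ : Matrix n n ℂ) (hρ : ρ.PosDef) (hρtr : Matrix.trace ρ = 1) :
    ((∑ k, P k * ρ * P k).PosDef ∧ Matrix.trace (∑ k, P k * ρ * P k) = 1) ∧
    relEnt ρ σ = relEnt ρ (∑ k, P k * ρ * P k) + relEnt (∑ k, P k * ρ * P k) σ :=
  relEnt_pinching_chain_rule_general P hPsa hPidem hPorth hPsum σ hσP ρ hρ hρtr
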